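/- arXiv:2007.15716 — 2 statements merged into one kernel-verified Lean document; each statement's English description precedes it below -/
import Mathlib

section
/- Let F be a field and A a locally matrix algebra over F, and let e ∈ A be a nonzero idempotent such that the corner algebra eAe is finite-dimensional over F. Then eAe is isomorphic as an F-algebra to a matrix algebra M_m(F) for some m ≥ 1. -/
/-!
Since `eAe` is finite-dimensional, it lies together with `e` in a subalgebra `B ≅ Mₙ(F)`, and
then `eAe = eBe`. Transported to `End(Fⁿ)`, `eBe` becomes the corner `p End(Fⁿ) p` at the
projection `p` corresponding to `e`; its elements preserve `range p` and are determined by their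
restriction to it, which identifies the corner with `End(range p) ≅ M_r(F)`, `r = rank p ≥ 1`.
-/

/-- A (not necessarily unital) associative algebra `A` over a field `F` is a *locally matrix
algebra* if every finite subset of `A` is contained in a subalgebra of `A` that is isomorphic
to a matrix algebra `Mₙ(F)` for some `n ≥ 1`. -/
def IsLocallyMatrix (F A : Type*) [Field F] [NonUnitalRing A] [Module F A]
    [SMulCommClass F A A] [IsScalarTower F A A] : Prop :=
  ∀ s : Finset A, ∃ (B : NonUnitalSubalgebra F A) (n : ℕ), 0 < n ∧ (s : Set A) ⊆ (B : Set A) ∧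
    ∃ f : B →ₙₐ[F] Matrix (Fin n) (Fin n) F, Function.Bijective f

/-- The corner `eAe = {e * x * e | x ∈ A}` of an algebra `A` at an idempotent `e`,
as a (non-unital) subalgebra of `A`. -/
def corner (F A : Type*) [Field F] [NonUnitalRing A] [Module F A]
    [SMulCommClass F A A] [IsScalarTower F A A] (e : A) :
    NonUnitalSubalgebra F A where
  carrier := Set.range fun x : A => e * x * e
  add_mem' := by
    rintro _ _ ⟨x, rfl⟩ ⟨y, rfl⟩
    exact ⟨x + y, by simp [mul_add, add_mul]⟩
  zero_mem' := ⟨0, by simp⟩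
  mul_mem' := by
    rintro _ _ ⟨x, rfl⟩ ⟨y, rfl⟩
    refine ⟨x * e * e * y, ?_⟩
    simp only [mul_assoc]
  smul_mem' := by
    rintro c _ ⟨x, rfl⟩
    exact ⟨c • x, by simp [smul_mul_assoc, mul_smul_comm]⟩

open Function LinearMap

section Corner

variable {F A B : Type*} [Field F]
  [NonUnitalRing A] [Module F A] [SMulCommClass F A A] [IsScalarTower F A A]
  [NonUnitalRing B] [Module F B] [SMulCommClass F B B] [IsScalarTower F B B]

theorem IsLocallyMatrix.exists_le_of_fg (hA : IsLocallyMatrix F A) {M : Submodule F A}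
    (hM : M.FG) :
    ∃ (B : NonUnitalSubalgebra F A) (n : ℕ), M ≤ B.toSubmodule ∧
      ∃ f : B →ₙₐ[F] Matrix (Fin n) (Fin n) F, Bijective f := by
  obtain ⟨s, rfl⟩ := hM
  obtain ⟨B, n, -, hsB, f, hf⟩ := hA s
  exact ⟨B, n, Submodule.span_le.2 hsB, f, hf⟩

theorem mem_corner_iff {e : A} (he : IsIdempotentElem e) {x : A} :
    x ∈ corner F A e ↔ e * x = x ∧ x * e = x :=
  Subsemigroup.mem_corner_iff he

def cornerMap (f : A →ₙₐ[F] B) (e : A) : corner F A e →ₙₐ[F] corner F B (f e) :=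
  NonUnitalAlgHom.codRestrict (f.comp (NonUnitalSubalgebraClass.subtype _)) _ <| by
    rintro ⟨_, x, rfl⟩
    exact ⟨f x, by
      simp only [NonUnitalAlgHom.comp_apply, NonUnitalSubalgebraClass.coe_subtype, map_mul]⟩

theorem cornerMap_bijective {f : A →ₙₐ[F] B} (hf : Bijective f) (e : A) :
    Bijective (cornerMap f e) := by
  refine ⟨fun x y hxy => Subtype.ext (hf.1 congr(($hxy : B))), ?_⟩
  rintro ⟨_, y, rfl⟩
  obtain ⟨x, rfl⟩ := hf.2 y
  exact ⟨⟨e * x * e, x, rfl⟩, Subtype.ext (by simp [cornerMap, map_mul])⟩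

def cornerInclusion {S : NonUnitalSubalgebra F A} {e : A} (he : IsIdempotentElem e) (heS : e ∈ S)
    (hS : corner F A e ≤ S) :
    corner F A e →ₙₐ[F] corner F S ⟨e, heS⟩ :=
  NonUnitalAlgHom.codRestrict (NonUnitalSubalgebra.inclusion hS) _ fun x =>
    ⟨NonUnitalSubalgebra.inclusion hS x, Subtype.ext <| by
      obtain ⟨hex, hxe⟩ := (mem_corner_iff he).1 x.2
      simp only [NonUnitalSubalgebra.coe_mul, NonUnitalSubalgebra.coe_inclusion, hex, hxe]⟩

theorem cornerInclusion_bijective {S : NonUnitalSubalgebra F A} {e : A} (he : IsIdempotentElem e)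
    (heS : e ∈ S) (hS : corner F A e ≤ S) : Bijective (cornerInclusion he heS hS) := by
  refine ⟨fun x y hxy => Subtype.ext congr((($hxy : S) : A)), ?_⟩
  rintro ⟨_, y, rfl⟩
  exact ⟨⟨e * y * e, y, rfl⟩, rfl⟩

end Corner

section End

variable {F V : Type*} [Field F] [AddCommGroup V] [Module F V] {p : Module.End F V}

theorem IsIdempotentElem.mapsTo_range_of_mem_corner (hp : IsIdempotentElem p)
    {f : Module.End F V} (hf : f ∈ corner F (Module.End F V) p) :
    Set.MapsTo f (range p) (range p) := by
  rintro _ -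
  rw [SetLike.mem_coe, ← ((mem_corner_iff hp).1 hf).1]
  exact mem_range_self p _

def cornerRestrictRange (hp : IsIdempotentElem p) :
    corner F (Module.End F V) p →ₙₐ[F] Module.End F (range p) where
  toFun f := f.1.restrict (hp.mapsTo_range_of_mem_corner f.2)
  map_smul' _ _ := rfl
  map_zero' := rfl
  map_add' _ _ := rfl
  map_mul' _ _ := rfl

theorem cornerRestrictRange_bijective (hp : IsIdempotentElem p) :
    Bijective (cornerRestrictRange hp) := by
  refine ⟨fun f g hfg => Subtype.ext ?_, fun u => ?_⟩
  · ext v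
    obtain ⟨-, hfp⟩ := (mem_corner_iff hp).1 f.2
    obtain ⟨-, hgp⟩ := (mem_corner_iff hp).1 g.2
    rw [← hfp, ← hgp]
    exact congr(($hfg ⟨p v, mem_range_self p v⟩ : V))
  · set f : Module.End F V := (range p).subtype ∘ₗ u ∘ₗ p.rangeRestrict
    have hf : f ∈ corner F (Module.End F V) p := by
      refine (mem_corner_iff hp).2 ⟨LinearMap.ext fun v => ?_, LinearMap.ext fun v => ?_⟩
      · exact (hp.mem_range_iff).1 (u _).2
      · change (u (p.rangeRestrict (p v)) : V) = u (p.rangeRestrict v)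
        have hpv : p.rangeRestrict (p v) = p.rangeRestrict v :=
          Subtype.ext (DFunLike.congr_fun hp.eq v)
        rw [hpv]
    refine ⟨⟨f, hf⟩, LinearMap.ext fun v => Subtype.ext ?_⟩
    change (u (p.rangeRestrict v) : V) = u v
    have hpv : p.rangeRestrict v = v := Subtype.ext ((hp.mem_range_iff).1 v.2)
    rw [hpv]

end End

/-- If `A` is a locally matrix algebra over a field `F` and `e ∈ A` is a nonzero idempotent
whose corner algebra `eAe` is finite-dimensional over `F`, then `eAe` is isomorphic as an
`F`-algebra to a matrix algebra `M_m(F)` for some `m ≥ 1`. -/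
theorem corner_isMatrixAlgebra (F A : Type*) [Field F] [NonUnitalRing A] [Module F A]
    [SMulCommClass F A A] [IsScalarTower F A A]
    (hA : IsLocallyMatrix F A)
    (e : A) (he : e * e = e) (hne : e ≠ 0)
    (hfd : Module.Finite F (corner F A e)) :
    ∃ m : ℕ, 0 < m ∧
      ∃ f : corner F A e →ₙₐ[F] Matrix (Fin m) (Fin m) F, Function.Bijective f := by
  have hM : ((corner F A e).toSubmodule ⊔ Submodule.span F {e}).FG :=
    (Module.Finite.iff_fg.1 hfd).sup (Submodule.fg_span_singleton e)
  obtain ⟨B, n, hMB, f, hf⟩ := hA.exists_le_of_fg hM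
  have heB : e ∈ B := hMB (Submodule.mem_sup_right (Submodule.mem_span_singleton_self e))
  have hB : corner F A e ≤ B := fun x hx => hMB (Submodule.mem_sup_left hx)
  let g : B →ₙₐ[F] Module.End F (Fin n → F) :=
    (Matrix.toLinAlgEquiv' : _ ≃ₐ[F] _).toAlgHom.toNonUnitalAlgHom.comp f
  have hg : Bijective g := Matrix.toLinAlgEquiv'.bijective.comp hf
  set p := g ⟨e, heB⟩
  have hp : IsIdempotentElem p := IsIdempotentElem.map (Subtype.ext he) g
  have hp0 : range p ≠ ⊥ := by
    rw [Ne, range_eq_bot, ← map_zero g]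
    exact hg.1.ne (by simpa [← Subtype.val_inj] using hne)
  let b := Module.finBasis F (range p)
  refine ⟨Module.finrank F (range p), Submodule.one_le_finrank_iff.2 hp0,
    (algEquivMatrix b).toAlgHom.toNonUnitalAlgHom.comp <| (cornerRestrictRange hp).comp <|
      (cornerMap g _).comp (cornerInclusion he heB hB), ?_⟩
  exact (algEquivMatrix b).bijective.comp <| (cornerRestrictRange_bijective hp).comp <|
    (cornerMap_bijective hg _).comp (cornerInclusion_bijective he heB hB)
end

section
/- Let F be a field and A an infinite-dimensional locally matrix algebra over F of countable dimension. Then the cardinality of the group Aut(A) of F-algebra automorphisms of A equals |F|^{ℵ₀}, the cardinal exponentiation of the cardinality of F by the countable cardinal ℵ₀. -/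
universe u v

open Module LinearMap

/-- The model is `f = E₁₁`, `y = E₁₂`: conjugation by `1 + c • y` sends `f` to `f - c • y`, so
it remembers `c`. -/
structure IsShearPair {R : Type*} [NonUnitalRing R] (f y : R) : Prop where
  ne_zero : y ≠ 0
  mul_eq_right : f * y = y
  mul_eq_zero : y * f = 0

namespace IsShearPair

variable {R S : Type*} [NonUnitalRing R] [NonUnitalRing S] {f y : R}

theorem mul_self (h : IsShearPair f y) : y * y = 0 := by
  nth_rewrite 2 [← h.mul_eq_right]
  rw [← mul_assoc, h.mul_eq_zero, zero_mul]

theorem map {G : Type*} [FunLike G R S] [NonUnitalRingHomClass G R S] (h : IsShearPair f y)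
    (φ : G) (hφ : Function.Injective φ) : IsShearPair (φ f) (φ y) where
  ne_zero := (map_ne_zero_iff φ hφ).2 h.ne_zero
  mul_eq_right := by rw [← map_mul, h.mul_eq_right]
  mul_eq_zero := by rw [← map_mul, h.mul_eq_zero, map_zero]

end IsShearPair

def IsMatrixUnits {R ι : Type*} [Ring R] [DecidableEq ι] (E : ι → ι → R) : Prop :=
  ∀ i j k l, E i j * E k l = if j = k then E i l else 0

theorem isMatrixUnits_single (R ι : Type*) [Ring R] [Fintype ι] [DecidableEq ι] :
    IsMatrixUnits (fun i j : ι => Matrix.single i j (1 : R)) := by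
  intro i j k l
  split_ifs with hjk
  · rw [hjk, Matrix.single_mul_single_same, one_mul]
  · exact Matrix.single_mul_single_of_ne _ _ _ _ hjk _

theorem IsMatrixUnits.map {R S ι : Type*} [Ring R] [Ring S] [DecidableEq ι] {E : ι → ι → R}
    (hE : IsMatrixUnits E) {G : Type*} [FunLike G R S] [NonUnitalRingHomClass G R S] (φ : G) :
    IsMatrixUnits (fun i j => φ (E i j)) := by
  intro i j k l
  simp only [← map_mul, hE i j k l]
  split_ifs <;> simp

section MatrixUnits

variable {R ι : Type*} [Ring R] [Fintype ι] [DecidableEq ι] {E : ι → ι → R}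

/-- The diagonal embedding `r ↦ r ⊗ 1` of the corner `E i₀ i₀ * R * E i₀ i₀` into the commutant of
the `E j k`. -/
def commutantLift (E : ι → ι → R) (i₀ : ι) (r : R) : R :=
  ∑ i, E i i₀ * r * E i₀ i

namespace IsMatrixUnits

variable (hE : IsMatrixUnits E)
include hE

omit [Fintype ι] in
theorem mul (i j k l : ι) : E i j * E k l = if j = k then E i l else 0 := hE i j k l

omit [Fintype ι] in
theorem isIdempotentElem (i : ι) : IsIdempotentElem (E i i) := by
  simpa [IsIdempotentElem] using hE.mul i i i i

theorem mul_commutantLift (i₀ j k : ι) (r : R) :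
    E j k * commutantLift E i₀ r = E j i₀ * r * E i₀ k := by
  simp [commutantLift, Finset.mul_sum, ← mul_assoc, hE.mul]

theorem commutantLift_mul (i₀ j k : ι) (r : R) :
    commutantLift E i₀ r * E j k = E j i₀ * r * E i₀ k := by
  simp [commutantLift, Finset.sum_mul, mul_assoc, hE.mul]

theorem commute_commutantLift (i₀ j k : ι) (r : R) : Commute (E j k) (commutantLift E i₀ r) :=
  (hE.mul_commutantLift i₀ j k r).trans (hE.commutantLift_mul i₀ j k r).symm

theorem commutantLift_mul_commutantLift (i₀ : ι) (a b : R) :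
    commutantLift E i₀ a * commutantLift E i₀ b = commutantLift E i₀ (a * E i₀ i₀ * b) := by
  rw [commutantLift, Finset.sum_mul]
  refine Finset.sum_congr rfl fun i _ => ?_
  rw [mul_assoc, hE.mul_commutantLift]
  simp only [mul_assoc]

theorem commutantLift_corner (i₀ : ι) (r : R) :
    commutantLift E i₀ (E i₀ i₀ * r * E i₀ i₀) = commutantLift E i₀ r := by
  refine Finset.sum_congr rfl fun i _ => ?_
  rw [show E i i₀ * (E i₀ i₀ * r * E i₀ i₀) * E i₀ i =
      E i i₀ * E i₀ i₀ * r * (E i₀ i₀ * E i₀ i) by simp only [mul_assoc],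
    hE.mul, hE.mul, if_pos rfl, if_pos rfl]

theorem corner_commutantLift (i₀ : ι) (r : R) :
    E i₀ i₀ * commutantLift E i₀ r * E i₀ i₀ = E i₀ i₀ * r * E i₀ i₀ := by
  rw [hE.mul_commutantLift, mul_assoc, hE.mul, if_pos rfl]

theorem isShearPair_commutantLift {i₀ : ι} {a b : R}
    (h : IsShearPair (E i₀ i₀ * a * E i₀ i₀) (E i₀ i₀ * b * E i₀ i₀)) :
    IsShearPair (commutantLift E i₀ a) (commutantLift E i₀ b) := by
  have lift_mul (a b : R) : commutantLift E i₀ a * commutantLift E i₀ b =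
      commutantLift E i₀ ((E i₀ i₀ * a * E i₀ i₀) * (E i₀ i₀ * b * E i₀ i₀)) := by
    rw [hE.commutantLift_mul_commutantLift, ← hE.commutantLift_corner]
    congr 1
    simp only [← mul_assoc]
    conv_rhs => rw [mul_assoc (E i₀ i₀ * a) (E i₀ i₀), (hE.isIdempotentElem i₀).eq]
  refine ⟨fun hb => h.ne_zero ?_, ?_, ?_⟩
  · rw [← hE.corner_commutantLift, hb, mul_zero, zero_mul]
  · rw [lift_mul, h.mul_eq_right, hE.commutantLift_corner]
  · rw [lift_mul, h.mul_eq_zero]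
    simp [commutantLift]

theorem isIdempotentElem_sum : IsIdempotentElem (∑ i, E i i) := by
  simp [IsIdempotentElem, Finset.sum_mul, Finset.mul_sum, hE.mul]

theorem mul_one_sub_sum (j k : ι) : E j k * (1 - ∑ i, E i i) = 0 := by
  simp [mul_sub, Finset.mul_sum, hE.mul]

theorem one_sub_sum_mul (j k : ι) : (1 - ∑ i, E i i) * E j k = 0 := by
  simp [sub_mul, Finset.sum_mul, hE.mul]

theorem commute_complement (j k : ι) (r : R) :
    Commute (E j k) ((1 - ∑ i, E i i) * r * (1 - ∑ i, E i i)) := by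
  have h₁ : E j k * ((1 - ∑ i, E i i) * r * (1 - ∑ i, E i i)) = 0 := by
    rw [← mul_assoc, ← mul_assoc, hE.mul_one_sub_sum, zero_mul, zero_mul]
  have h₂ : (1 - ∑ i, E i i) * r * (1 - ∑ i, E i i) * E j k = 0 := by
    rw [mul_assoc, hE.one_sub_sum_mul, mul_zero]
  exact h₁.trans h₂.symm

end IsMatrixUnits

end MatrixUnits

section Corner

variable {F V : Type*} [Field F] [AddCommGroup V] [Module F V]

theorem exists_isShearPair_corner {p : Module.End F V} (hp : IsIdempotentElem p)
    (h : 2 ≤ finrank F (range p)) : ∃ f y, IsShearPair (p * f * p) (p * y * p) := by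
  have : Module.Finite F (range p) := Module.finite_of_finrank_pos (by omega)
  let b := Module.finBasis F (range p)
  let w (k : Fin (finrank F (range p))) : V := b k
  let c (k : Fin (finrank F (range p))) : V →ₗ[F] F := b.coord k ∘ₗ p.rangeRestrict
  have hp_w (k) : p (w k) = w k := by
    obtain ⟨v, hv⟩ := (b k).2
    change p (b k : V) = b k
    rw [← hv, ← Module.End.mul_apply, hp.eq]
  have hc (k l) : c k (w l) = if l = k then 1 else 0 := by
    have : p.rangeRestrict (w l) = b l := Subtype.ext (hp_w l)
    simp [c, this, Finsupp.single_apply]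
  have hc_p (k v) : c k (p v) = c k v := by
    have : p.rangeRestrict (p v) = p.rangeRestrict v := Subtype.ext (by
      simp only [codRestrict_apply, rangeRestrict, ← Module.End.mul_apply, hp.eq])
    simp [c, this]
  have corner (k l) : p * (c k).smulRight (w l) * p = (c k).smulRight (w l) := by
    ext v
    simp [hc_p, hp_w]
  let i : Fin (finrank F (range p)) := ⟨0, by omega⟩
  let j : Fin (finrank F (range p)) := ⟨1, by omega⟩
  have hij : i ≠ j := by simp [i, j, Fin.ext_iff]
  refine ⟨(c i).smulRight (w i), (c j).smulRight (w i), ?_⟩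
  rw [corner, corner]
  refine ⟨fun h0 => b.ne_zero i ?_, ?_, ?_⟩
  · have := LinearMap.congr_fun h0 (w j)
    simp only [LinearMap.smulRight_apply, hc, if_true, one_smul, LinearMap.zero_apply] at this
    exact Subtype.ext this
  · ext v
    simp [hc]
  · ext v
    simp [hc, hij]

end Corner

namespace LinearMap

variable {F V W : Type*} [Field F] [AddCommGroup V] [Module F V] [AddCommGroup W] [Module F W]
  [FiniteDimensional F V]

theorem finrank_range_add_le (f g : V →ₗ[F] W) :
    finrank F (range (f + g)) ≤ finrank F (range f) + finrank F (range g) :=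
  (Submodule.finrank_mono (range_add_le f g)).trans
    (Submodule.finrank_add_le_finrank_add_finrank _ _)

theorem finrank_range_sum_le {η : Type*} (s : Finset η) (f : η → V →ₗ[F] W) :
    finrank F (range (∑ d ∈ s, f d)) ≤ ∑ d ∈ s, finrank F (range (f d)) :=
  Finset.sum_hom_rel (r := fun g n => finrank F (range g) ≤ n) (by simp)
    fun _ _ _ h => (finrank_range_add_le _ _).trans (by gcongr)

end LinearMap

section Commutant

variable {F V ι : Type*} [Field F] [AddCommGroup V] [Module F V] [FiniteDimensional F V]
  [Fintype ι] [DecidableEq ι]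

theorem exists_isShearPair_commute_of_isMatrixUnits {E : ι → ι → Module.End F V}
    (hE : IsMatrixUnits E) (hV : Fintype.card ι + 2 ≤ finrank F V) :
    ∃ f y, IsShearPair f y ∧ ∀ i j, Commute (E i j) f ∧ Commute (E i j) y := by
  by_cases hbig : ∃ i, 2 ≤ finrank F (range (E i i))
  · obtain ⟨i₀, hi₀⟩ := hbig
    obtain ⟨a, b, hab⟩ := exists_isShearPair_corner (hE.isIdempotentElem i₀) hi₀
    exact ⟨_, _, hE.isShearPair_commutantLift hab,
      fun i j => ⟨hE.commute_commutantLift i₀ i j a, hE.commute_commutantLift i₀ i j b⟩⟩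
  · push Not at hbig
    have hcompl : 2 ≤ finrank F (range (1 - ∑ i, E i i)) := by
      have hsplit := LinearMap.finrank_range_add_le (∑ i, E i i) (1 - ∑ i, E i i)
      rw [add_sub_cancel, LinearMap.range_eq_top.2 fun v => ⟨v, rfl⟩, finrank_top] at hsplit
      have hsum : finrank F (range (∑ i, E i i)) ≤ Fintype.card ι :=
        (LinearMap.finrank_range_sum_le _ _).trans <|
          (Finset.sum_le_sum fun i _ => Nat.le_of_lt_succ (hbig i)).trans (by simp)
      omega
    obtain ⟨a, b, hab⟩ := exists_isShearPair_corner hE.isIdempotentElem_sum.one_sub hcompl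
    exact ⟨_, _, hab, fun i j => ⟨hE.commute_complement i j a, hE.commute_complement i j b⟩⟩

theorem exists_isShearPair_commute_range (ψ : Matrix ι ι F →ₙₐ[F] Module.End F V)
    (hV : Fintype.card ι + 2 ≤ finrank F V) :
    ∃ f y, IsShearPair f y ∧ ∀ M, Commute (ψ M) f ∧ Commute (ψ M) y := by
  obtain ⟨f, y, hfy, hcomm⟩ :=
    exists_isShearPair_commute_of_isMatrixUnits ((isMatrixUnits_single F ι).map ψ) hV
  refine ⟨f, y, hfy, fun M => ?_⟩
  have hM : ψ M = ∑ i, ∑ j, M i j • ψ (Matrix.single i j 1) := by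
    conv_lhs => rw [M.matrix_eq_sum_single]
    simp [map_sum, ← map_smul, Matrix.smul_single]
  rw [hM]
  exact ⟨.sum_left _ _ _ fun i _ => .sum_left _ _ _ fun j _ => (hcomm i j).1.smul_left _,
    .sum_left _ _ _ fun i _ => .sum_left _ _ _ fun j _ => (hcomm i j).2.smul_left _⟩

end Commutant

section LocallyMatrix

variable {F A : Type*} [Field F] [NonUnitalRing A] [Module F A]

variable (F A) in
structure MatrixSubalgebra where
  toSubalgebra : NonUnitalSubalgebra F A
  n : ℕ
  toMatrix : toSubalgebra →ₙₐ[F] Matrix (Fin n) (Fin n) F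
  bijective : Function.Bijective toMatrix

namespace MatrixSubalgebra

variable (S : MatrixSubalgebra F A)

noncomputable def linearEquiv : S.toSubalgebra ≃ₗ[F] Matrix (Fin S.n) (Fin S.n) F :=
  LinearEquiv.ofBijective (S.toMatrix : S.toSubalgebra →ₗ[F] _) S.bijective

instance : Module.Finite F S.toSubalgebra := Module.Finite.equiv S.linearEquiv.symm

noncomputable def ofMatrix : Matrix (Fin S.n) (Fin S.n) F →ₙₐ[F] S.toSubalgebra :=
  NonUnitalAlgHom.inverse S.toMatrix (Function.surjInv S.bijective.2)
    (Function.leftInverse_surjInv S.bijective) (Function.rightInverse_surjInv S.bijective.2)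

theorem ofMatrix_toMatrix (b : S.toSubalgebra) : S.ofMatrix (S.toMatrix b) = b :=
  Function.leftInverse_surjInv S.bijective b

theorem finrank_eq : finrank F S.toSubalgebra = S.n * S.n := by
  simp [S.linearEquiv.finrank_eq, Module.finrank_matrix]

theorem exists_le [SMulCommClass F A A] [IsScalarTower F A A] (hA : IsLocallyMatrix F A)
    (hinf : ¬ Module.Finite F A) (x : A) :
    ∃ T : MatrixSubalgebra F A,
      S.toSubalgebra ≤ T.toSubalgebra ∧ x ∈ T.toSubalgebra ∧ S.n + 2 ≤ T.n := by
  classical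
  obtain ⟨s₁, hspan⟩ : S.toSubalgebra.toSubmodule.FG := Module.Finite.iff_fg.1
    (inferInstanceAs (Module.Finite F S.toSubalgebra))
  have hrank : (((S.n + 2) * (S.n + 2) : ℕ) : Cardinal) ≤ Module.rank F A :=
    Cardinal.natCast_lt_aleph0.le.trans (not_lt.1 (Module.rank_lt_aleph0_iff.not.2 hinf))
  obtain ⟨s₂, hcard, hli⟩ := le_rank_iff_exists_linearIndependent_finset.1 hrank
  obtain ⟨B, m, -, hsub, g, hg⟩ := hA (s₁ ∪ s₂ ∪ {x})
  let T : MatrixSubalgebra F A := ⟨B, m, g, hg⟩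
  have hs₁ : (s₁ : Set A) ⊆ B := fun a ha => hsub (by simp [ha])
  have hs₂ : (s₂ : Set A) ⊆ B := fun a ha => hsub (by simp [ha])
  refine ⟨T, fun a ha => ?_, hsub (by simp), ?_⟩
  · rw [← NonUnitalSubalgebra.mem_toSubmodule, ← hspan] at ha
    exact Submodule.span_le (p := B.toSubmodule).2 hs₁ ha
  · have hdim : (S.n + 2) * (S.n + 2) ≤ T.n * T.n := by
      have : Module.Finite F B.toSubmodule := Module.Finite.equiv T.linearEquiv.symm
      rw [← T.finrank_eq, ← hcard, ← finrank_span_finset_eq_card hli]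
      exact Submodule.finrank_mono (Submodule.span_le (p := B.toSubmodule).2 hs₂)
    exact Nat.mul_self_le_mul_self_iff.1 hdim

theorem exists_isShearPair_commute {S T : MatrixSubalgebra F A}
    (hST : S.toSubalgebra ≤ T.toSubalgebra) (hn : S.n + 2 ≤ T.n) :
    ∃ f ∈ T.toSubalgebra, ∃ y ∈ T.toSubalgebra,
      IsShearPair f y ∧ ∀ b ∈ S.toSubalgebra, Commute b f ∧ Commute b y := by
  let χ : T.toSubalgebra →ₙₐ[F] Module.End F (Fin T.n → F) :=
    (Matrix.toLinAlgEquiv' : Matrix (Fin T.n) (Fin T.n) F ≃ₐ[F] _).toAlgHom.toNonUnitalAlgHom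
      |>.comp T.toMatrix
  let e := RingEquiv.ofBijective χ (Matrix.toLinAlgEquiv'.bijective.comp T.bijective)
  obtain ⟨f, y, hfy, hcomm⟩ := exists_isShearPair_commute_range
    (χ.comp ((NonUnitalSubalgebra.inclusion hST).comp S.ofMatrix)) (by simpa using hn)
  have hcomm' (b : A) (hb : b ∈ S.toSubalgebra) :
      Commute (⟨b, hST hb⟩ : T.toSubalgebra) (e.symm f) ∧
        Commute (⟨b, hST hb⟩ : T.toSubalgebra) (e.symm y) := by
    obtain ⟨hf, hy⟩ := hcomm (S.toMatrix ⟨b, hb⟩)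
    have hb' : e.symm (χ.comp ((NonUnitalSubalgebra.inclusion hST).comp S.ofMatrix)
        (S.toMatrix ⟨b, hb⟩)) = ⟨b, hST hb⟩ := by
      simp only [NonUnitalAlgHom.comp_apply, S.ofMatrix_toMatrix]
      exact e.symm_apply_apply _
    exact ⟨hb' ▸ hf.map e.symm, hb' ▸ hy.map e.symm⟩
  refine ⟨e.symm f, (e.symm f).2, e.symm y, (e.symm y).2,
    (hfy.map e.symm e.symm.injective).map (NonUnitalSubalgebraClass.subtype _)
      Subtype.val_injective,
    fun b hb => ⟨congrArg Subtype.val (hcomm' b hb).1, congrArg Subtype.val (hcomm' b hb).2⟩⟩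

end MatrixSubalgebra

end LocallyMatrix

section SqZeroConj

variable {F A : Type*} [Field F] [NonUnitalRing A] [Module F A]
  [SMulCommClass F A A] [IsScalarTower F A A]

/-- In the unitization this is conjugation by the unit `1 + c • w` (see `inr_sqZeroConj`) when
`w * w = 0`. -/
noncomputable def sqZeroConj (w : A) (c : F) : A →ₗ[F] A :=
  LinearMap.id + c • (LinearMap.mulLeft F w - LinearMap.mulRight F w)
    - (c * c) • (LinearMap.mulRight F w ∘ₗ LinearMap.mulLeft F w)

theorem sqZeroConj_apply (w : A) (c : F) (x : A) :
    sqZeroConj w c x = x + c • (w * x - x * w) - (c * c) • (w * x * w) := rfl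

theorem inr_sqZeroConj (w : A) (c : F) (x : A) :
    (sqZeroConj w c x : Unitization F A) = (1 + ↑(c • w)) * x * (1 - ↑(c • w)) := by
  rw [sqZeroConj_apply]
  push_cast
  simp only [add_mul, mul_sub, smul_mul_assoc, mul_smul_comm, one_mul, mul_one, smul_add,
    smul_sub, smul_smul]
  abel

theorem one_sub_mul_one_add_of_mul_self {w : A} (hw : w * w = 0) (c : F) :
    (1 - ↑(c • w) : Unitization F A) * (1 + ↑(c • w)) = 1 := by
  have hsq : (↑(c • w) * ↑(c • w) : Unitization F A) = 0 := by
    rw [← Unitization.inr_mul, smul_mul_smul_comm, hw, smul_zero, Unitization.inr_zero]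
  rw [mul_add, sub_mul, sub_mul, hsq]
  simp

theorem sqZeroConj_mul {w : A} (hw : w * w = 0) (c : F) (x z : A) :
    sqZeroConj w c (x * z) = sqZeroConj w c x * sqZeroConj w c z := by
  apply Unitization.inr_injective (R := F)
  rw [Unitization.inr_mul, inr_sqZeroConj, inr_sqZeroConj, inr_sqZeroConj, Unitization.inr_mul]
  set D : Unitization F A := ↑(c • w)
  calc (1 + D) * (↑x * ↑z) * (1 - D)
      = (1 + D) * (↑x * ((1 - D) * (1 + D)) * ↑z) * (1 - D) := by
        rw [one_sub_mul_one_add_of_mul_self hw, mul_one]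
    _ = (1 + D) * ↑x * (1 - D) * ((1 + D) * ↑z * (1 - D)) := by simp only [mul_assoc]

theorem sqZeroConj_neg_sqZeroConj {w : A} (hw : w * w = 0) (c : F) (x : A) :
    sqZeroConj w (-c) (sqZeroConj w c x) = x := by
  apply Unitization.inr_injective (R := F)
  rw [inr_sqZeroConj, inr_sqZeroConj, neg_smul, Unitization.inr_neg, ← sub_eq_add_neg,
    sub_neg_eq_add]
  set D : Unitization F A := ↑(c • w)
  calc (1 - D) * ((1 + D) * ↑x * (1 - D)) * (1 + D)
      = (1 - D) * (1 + D) * ↑x * ((1 - D) * (1 + D)) := by simp only [mul_assoc]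
    _ = ↑x := by rw [one_sub_mul_one_add_of_mul_self hw, one_mul, mul_one]

theorem sqZeroConj_of_commute {w x : A} (hw : w * w = 0) (hx : Commute w x) (c : F) :
    sqZeroConj w c x = x := by
  rw [sqZeroConj_apply, hx.eq, sub_self, smul_zero, add_zero, mul_assoc, hw, mul_zero,
    smul_zero, sub_zero]

theorem sqZeroConj_mem {B : NonUnitalSubalgebra F A} {w x : A} (hw : w ∈ B) (hx : x ∈ B)
    (c : F) : sqZeroConj w c x ∈ B := by
  rw [sqZeroConj_apply]
  exact sub_mem (add_mem hx (SMulMemClass.smul_mem _ (sub_mem (mul_mem hw hx) (mul_mem hx hw))))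
    (SMulMemClass.smul_mem _ (mul_mem (mul_mem hw hx) hw))

noncomputable def sqZeroConjEquiv {w : A} (hw : w * w = 0) (c : F) : A ≃ₗ[F] A :=
  { sqZeroConj w c with
    invFun := sqZeroConj w (-c)
    left_inv := sqZeroConj_neg_sqZeroConj hw c
    right_inv x := by simpa using sqZeroConj_neg_sqZeroConj hw (-c) x }

end SqZeroConj

section

variable {F A : Type*} [Field F] [NonUnitalRing A] [Module F A]

variable (F A) in
structure ShearChain where
  B : ℕ → NonUnitalSubalgebra F A
  f : ℕ → A
  y : ℕ → A
  mono : Monotone B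
  exists_mem : ∀ x, ∃ j, x ∈ B j
  f_mem : ∀ j, f j ∈ B (j + 1)
  y_mem : ∀ j, y j ∈ B (j + 1)
  isShearPair : ∀ j, IsShearPair (f j) (y j)
  commute : ∀ j, ∀ b ∈ B j, Commute b (f j) ∧ Commute b (y j)

theorem nonempty_shearChain [SMulCommClass F A A] [IsScalarTower F A A] (hA : IsLocallyMatrix F A)
    (hinf : ¬ Module.Finite F A) {a : ℕ → A} (ha : Submodule.span F (Set.range a) = ⊤) :
    Nonempty (ShearChain F A) := by
  obtain ⟨B₀, n₀, -, -, g₀, hg₀⟩ := hA ∅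
  choose next hle hmem hn using fun (S : MatrixSubalgebra F A) x => S.exists_le hA hinf x
  let S (j : ℕ) : MatrixSubalgebra F A := Nat.rec ⟨B₀, n₀, g₀, hg₀⟩ (fun j S => next S (a j)) j
  choose f hf y hy hpair hcomm using fun j =>
    MatrixSubalgebra.exists_isShearPair_commute (hle (S j) (a j)) (hn (S j) (a j))
  have mono : Monotone fun j => (S j).toSubalgebra :=
    monotone_nat_of_le_succ fun j => hle (S j) (a j)
  refine ⟨⟨fun j => (S j).toSubalgebra, f, y, mono, fun x => ?_, hf, hy, hpair, hcomm⟩⟩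
  have hspan : Submodule.span F (Set.range a) ≤ ⨆ j, (S j).toSubalgebra.toSubmodule :=
    Submodule.span_le.2 <| Set.range_subset_iff.2 fun j =>
      Submodule.mem_iSup_of_mem (j + 1) (hmem (S j) (a j))
  rw [ha] at hspan
  have mono' : Monotone fun j => (S j).toSubalgebra.toSubmodule := fun i j hij => mono hij
  exact (Submodule.mem_iSup_of_directed _ mono'.directed_le).1 (hspan trivial)

namespace ShearChain

variable (C : ShearChain F A)

theorem exists_mem₂ (x z : A) : ∃ J, x ∈ C.B J ∧ z ∈ C.B J := by
  obtain ⟨J, hJ⟩ := C.exists_mem x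
  obtain ⟨K, hK⟩ := C.exists_mem z
  exact ⟨max J K, C.mono (le_max_left J K) hJ, C.mono (le_max_right J K) hK⟩

open Classical in
noncomputable def index (x : A) : ℕ := Nat.find (C.exists_mem x)

theorem mem_index (x : A) : x ∈ C.B (C.index x) := by
  classical exact Nat.find_spec (C.exists_mem x)

variable [SMulCommClass F A A] [IsScalarTower F A A] (c : ℕ → F)

noncomputable def partialConj : ℕ → A ≃ₗ[F] A
  | 0 => LinearEquiv.refl F A
  | J + 1 => (partialConj J).trans (sqZeroConjEquiv (C.isShearPair J).mul_self (c J))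

theorem partialConj_succ_apply (J : ℕ) (x : A) :
    C.partialConj c (J + 1) x = sqZeroConj (C.y J) (c J) (C.partialConj c J x) := rfl

theorem partialConj_mul (J : ℕ) (x z : A) :
    C.partialConj c J (x * z) = C.partialConj c J x * C.partialConj c J z := by
  induction J with
  | zero => rfl
  | succ J ih => rw [partialConj_succ_apply, ih, sqZeroConj_mul (C.isShearPair J).mul_self]; rfl

theorem partialConj_mem {J K : ℕ} (hJK : J ≤ K) {x : A} (hx : x ∈ C.B K) :
    C.partialConj c J x ∈ C.B K := by
  induction J with
  | zero => exact hx
  | succ J ih => exact sqZeroConj_mem (C.mono hJK (C.y_mem J)) (ih (by omega)) _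

theorem partialConj_symm_mem {J K : ℕ} (hJK : J ≤ K) {x : A} (hx : x ∈ C.B K) :
    (C.partialConj c J).symm x ∈ C.B K := by
  induction J generalizing x with
  | zero => exact hx
  | succ J ih => exact ih (by omega) (sqZeroConj_mem (C.mono hJK (C.y_mem J)) hx _)

theorem partialConj_of_commute {J : ℕ} {x : A} (hx : ∀ i < J, Commute (C.y i) x) :
    C.partialConj c J x = x := by
  induction J with
  | zero => rfl
  | succ J ih =>
    rw [partialConj_succ_apply, ih fun i hi => hx i (by omega),
      sqZeroConj_of_commute (C.isShearPair J).mul_self (hx J J.lt_succ_self)]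

theorem partialConj_eq_of_le {J K : ℕ} (hJK : J ≤ K) {x : A} (hx : x ∈ C.B J) :
    C.partialConj c K x = C.partialConj c J x := by
  induction K, hJK using Nat.le_induction with
  | base => rfl
  | succ K hJK ih =>
    have hmem : C.partialConj c J x ∈ C.B K := C.partialConj_mem c hJK (C.mono hJK hx)
    rw [partialConj_succ_apply, ih,
      sqZeroConj_of_commute (C.isShearPair K).mul_self (C.commute K _ hmem).2.symm]

theorem partialConj_index {J : ℕ} {x : A} (hx : x ∈ C.B J) :
    C.partialConj c (C.index x) x = C.partialConj c J x := by
  rcases le_total (C.index x) J with h | h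
  · exact (C.partialConj_eq_of_le c h (C.mem_index x)).symm
  · exact C.partialConj_eq_of_le c h hx

/-- The limit of the partial conjugations, which stabilise on each `B J`. -/
noncomputable def aut : A →ₗ[F] A where
  toFun x := C.partialConj c (C.index x) x
  map_add' x z := by
    obtain ⟨J, hx, hz⟩ := C.exists_mem₂ x z
    simp only [C.partialConj_index c (add_mem hx hz), C.partialConj_index c hx,
      C.partialConj_index c hz, map_add]
  map_smul' t x := by
    simp only [C.partialConj_index c (SMulMemClass.smul_mem t (C.mem_index x)), map_smul,
      RingHom.id_apply]

theorem aut_apply {J : ℕ} {x : A} (hx : x ∈ C.B J) : C.aut c x = C.partialConj c J x :=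
  C.partialConj_index c hx

theorem aut_mul (x z : A) : C.aut c (x * z) = C.aut c x * C.aut c z := by
  obtain ⟨J, hx, hz⟩ := C.exists_mem₂ x z
  rw [C.aut_apply c (mul_mem hx hz), C.aut_apply c hx, C.aut_apply c hz, partialConj_mul]

theorem aut_bijective : Function.Bijective (C.aut c) := by
  refine ⟨fun x z hxz => ?_, fun z => ?_⟩
  · obtain ⟨J, hx, hz⟩ := C.exists_mem₂ x z
    rw [C.aut_apply c hx, C.aut_apply c hz] at hxz
    exact (C.partialConj c J).injective hxz
  · obtain ⟨J, hz⟩ := C.exists_mem z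
    refine ⟨(C.partialConj c J).symm z, ?_⟩
    rw [C.aut_apply c (C.partialConj_symm_mem c le_rfl hz), LinearEquiv.apply_symm_apply]

theorem aut_apply_f (j : ℕ) : C.aut c (C.f j) = C.f j - c j • C.y j := by
  have hfix : ∀ i < j, Commute (C.y i) (C.f j) := fun i hi =>
    (C.commute j _ (C.mono (Nat.succ_le_of_lt hi) (C.y_mem i))).1
  rw [C.aut_apply c (C.f_mem j), partialConj_succ_apply, C.partialConj_of_commute c hfix,
    sqZeroConj_apply, (C.isShearPair j).mul_eq_zero, (C.isShearPair j).mul_eq_right, zero_mul]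
  simp [sub_eq_add_neg]

theorem aut_injective : Function.Injective C.aut := by
  intro c c' h
  funext j
  have hj := LinearMap.congr_fun h (C.f j)
  rw [aut_apply_f, aut_apply_f, sub_right_inj] at hj
  exact smul_left_injective F (C.isShearPair j).ne_zero hj

end ShearChain

end

theorem Module.Basis.nonempty_end_embedding {F M : Type*} [Field F] [AddCommGroup M]
    [Module F M] (b : Basis ℕ F M) : Nonempty (Module.End F M ↪ (ℕ → F)) := by
  let coords : M ↪ (ℕ → F) :=
    ⟨fun x => b.repr x, fun x z h => b.repr.injective (DFunLike.coe_injective h)⟩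
  let values : Module.End F M ↪ (ℕ → M) := ⟨fun φ => φ ∘ b, fun φ ψ h => b.ext (congrFun h)⟩
  exact ⟨(values.trans (Function.Embedding.arrowCongrRight coords)).trans
    ((Equiv.curry ℕ ℕ F).symm.trans (Equiv.arrowCongr Nat.pairEquiv (Equiv.refl F))).toEmbedding⟩

theorem nonempty_basis_nat {F M : Type*} [Field F] [AddCommGroup M] [Module F M]
    (hinf : ¬ Module.Finite F M) (hcnt : Module.rank F M ≤ Cardinal.aleph0) :
    Nonempty (Basis ℕ F M) := by
  let b := Basis.ofVectorSpace F M
  have hrank : Module.rank F M = Cardinal.aleph0 :=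
    le_antisymm hcnt (not_lt.1 (Module.rank_lt_aleph0_iff.not.2 hinf))
  obtain ⟨e⟩ : Nonempty (Basis.ofVectorSpaceIndex F M ≃ ℕ) :=
    Cardinal.lift_mk_eq'.1 (by simp [b.mk_eq_rank'', hrank])
  exact ⟨b.reindex e⟩

/-- **Theorem 8 (automorphism count)**: for an infinite-dimensional locally matrix algebra
`A` of countable dimension over a field `F`, the group `Aut(A)` of `F`-algebra automorphisms
of `A` (bijective `F`-linear multiplicative self-maps) has cardinality `|F| ^ ℵ₀`. -/
theorem card_aut_of_locallyMatrix (F : Type u) (A : Type v) [Field F]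
    [NonUnitalRing A] [Module F A] [SMulCommClass F A A] [IsScalarTower F A A]
    (hA : IsLocallyMatrix F A) (hinf : ¬ Module.Finite F A)
    (hcnt : Module.rank F A ≤ Cardinal.aleph0) :
    Cardinal.lift.{u}
        (Cardinal.mk {φ : A →ₗ[F] A //
          Function.Bijective φ ∧ ∀ x y : A, φ (x * y) = φ x * φ y}) =
      Cardinal.lift.{v} (Cardinal.mk F) ^ (Cardinal.aleph0 : Cardinal.{max u v}) := by
  obtain ⟨b⟩ := nonempty_basis_nat hinf hcnt
  obtain ⟨C⟩ := nonempty_shearChain hA hinf b.span_eq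
  obtain ⟨toCoords⟩ := b.nonempty_end_embedding
  have hpow : Cardinal.lift.{v} (Cardinal.mk F) ^ (Cardinal.aleph0 : Cardinal.{max u v}) =
      Cardinal.lift.{v} (Cardinal.mk (ℕ → F)) := by
    simp
  rw [hpow]
  refine le_antisymm (Cardinal.lift_mk_le'.2 ⟨(Function.Embedding.subtype _).trans toCoords⟩)
    (Cardinal.lift_mk_le'.2 ⟨⟨fun c => ⟨C.aut c, C.aut_bijective c, C.aut_mul c⟩,
      fun c c' h => C.aut_injective (congrArg Subtype.val h)⟩⟩)
end
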